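/- arXiv:2111.03151 — 8 statements merged into one kernel-verified Lean document; each statement's English description precedes it below -/
import Mathlib

section
/- Let f : [0,∞) → [0,∞) be a non-decreasing function and g : [0,∞) → ℝ a function with g(0) = 0 such that for all 0 ≤ z ≤ z', z·(f(z') − f(z)) ≤ g(z') − g(z) ≤ z'·(f(z') − f(z)). Then for every z ≥ 0, g(z) = z·f(z) − ∫₀ᶻ f(t) dt. -/
/-- **Myerson's payment identity (technical lemma).**
If `f : [0,∞) → [0,∞)` is non-decreasing, `g(0) = 0`, and the payment sandwich
`z·(f z' − f z) ≤ g z' − g z ≤ z'·(f z' − f z)` holds for all `0 ≤ z ≤ z'`,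
then `g z = z·f z − ∫₀ᶻ f`. -/
theorem myerson_payment_identity
    (f g : ℝ → ℝ)
    (hf_nonneg : ∀ z, 0 ≤ z → 0 ≤ f z)
    (hf_mono : ∀ z z', 0 ≤ z → z ≤ z' → f z ≤ f z')
    (hg0 : g 0 = 0)
    (hsandwich : ∀ z z', 0 ≤ z → z ≤ z' →
      z * (f z' - f z) ≤ g z' - g z ∧ g z' - g z ≤ z' * (f z' - f z)) :
    ∀ z, 0 ≤ z → g z = z * f z - ∫ t in (0:ℝ)..z, f t := by
  intro z hz
  set h : ℝ → ℝ := fun t => t * f t - g t with hh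
  have key : ∀ a b : ℝ, 0 ≤ a → a ≤ b →
      f a * (b - a) ≤ h b - h a ∧ h b - h a ≤ f b * (b - a) := by
    intro a b ha hab
    obtain ⟨h1, h2⟩ := hsandwich a b ha hab
    constructor <;> simp only [hh] <;> nlinarith
  have hint : ∀ a b : ℝ, 0 ≤ a → a ≤ b → IntervalIntegrable f MeasureTheory.volume a b := by
    intro a b ha hab
    apply MonotoneOn.intervalIntegrable
    intro x hx y hy hxy
    rw [Set.uIcc_of_le hab] at hx hy
    exact hf_mono x y (le_trans ha hx.1) hxy
  have ibound : ∀ a b : ℝ, 0 ≤ a → a ≤ b →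
      f a * (b - a) ≤ (∫ t in a..b, f t) ∧ (∫ t in a..b, f t) ≤ f b * (b - a) := by
    intro a b ha hab
    constructor
    · have := intervalIntegral.integral_mono_on hab (intervalIntegrable_const (c := f a))
        (hint a b ha hab) (fun x hx => hf_mono a x ha hx.1)
      simpa [mul_comm] using this
    · have := intervalIntegral.integral_mono_on hab (hint a b ha hab)
        (intervalIntegrable_const (c := f b))
        (fun x hx => hf_mono x b (le_trans ha hx.1) hx.2)
      simpa [mul_comm] using this
  -- main bound for each n ≥ 1
  set I := ∫ t in (0:ℝ)..z, f t with hI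
  have main : ∀ n : ℕ, |h z - I| ≤ z * (f z - f 0) / (n + 1) := by
    intro n
    set N := n + 1 with hN
    set Δ := z / N with hΔ
    have hΔpos : 0 ≤ Δ := by positivity
    set a : ℕ → ℝ := fun i => i * Δ with ha
    have ha0 : a 0 = 0 := by simp [ha]
    have haN : a N = z := by
      simp only [ha, hΔ]
      have hN0 : (N:ℝ) ≠ 0 := by rw [hN]; push_cast; positivity
      field_simp
    have hamono : ∀ i : ℕ, a i ≤ a (i + 1) := by
      intro i
      simp only [ha]
      push_cast
      nlinarith
    have hapos : ∀ i : ℕ, 0 ≤ a i := by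
      intro i
      simp only [ha]; positivity
    have hsum_h : ∑ i ∈ Finset.range N, (h (a (i+1)) - h (a i)) = h z - h 0 := by
      rw [Finset.sum_range_sub (fun i => h (a i)), ha0, haN]
    have hsum_I : ∑ i ∈ Finset.range N, (∫ t in a i..a (i+1), f t) = I := by
      rw [hI, ← ha0, ← haN]
      exact intervalIntegral.sum_integral_adjacent_intervals
        (fun k _ => hint _ _ (hapos k) (hamono k))
    have hdiff : ∀ i : ℕ, a (i+1) - a i = Δ := by
      intro i; simp only [ha]; push_cast; ring
    have hterm : ∀ i ∈ Finset.range N,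
        |(h (a (i+1)) - h (a i)) - (∫ t in a i..a (i+1), f t)| ≤ (f (a (i+1)) - f (a i)) * Δ := by
      intro i _
      obtain ⟨k1, k2⟩ := key (a i) (a (i+1)) (hapos i) (hamono i)
      obtain ⟨j1, j2⟩ := ibound (a i) (a (i+1)) (hapos i) (hamono i)
      rw [hdiff i] at k1 k2 j1 j2
      rw [abs_le]
      constructor <;> nlinarith
    have hz0 : h 0 = 0 := by simp [hh, hg0]
    calc |h z - I| = |∑ i ∈ Finset.range N,
          ((h (a (i+1)) - h (a i)) - (∫ t in a i..a (i+1), f t))| := by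
            rw [Finset.sum_sub_distrib, hsum_h, hsum_I, hz0, sub_zero]
      _ ≤ ∑ i ∈ Finset.range N, |(h (a (i+1)) - h (a i)) - (∫ t in a i..a (i+1), f t)| :=
            Finset.abs_sum_le_sum_abs _ _
      _ ≤ ∑ i ∈ Finset.range N, (f (a (i+1)) - f (a i)) * Δ := Finset.sum_le_sum hterm
      _ = (f z - f 0) * Δ := by
            rw [← Finset.sum_mul, Finset.sum_range_sub (fun i => f (a i)), ha0, haN]
      _ = z * (f z - f 0) / (n + 1) := by rw [hΔ]; push_cast [hN]; ring
  have habs : |h z - I| ≤ 0 := by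
    have hten : Filter.Tendsto (fun n : ℕ => z * (f z - f 0) / (n + 1)) Filter.atTop (nhds 0) := by
      have := Filter.Tendsto.const_mul (z * (f z - f 0)) tendsto_one_div_add_atTop_nhds_zero_nat
      simpa [div_eq_mul_inv, mul_comm] using this
    exact ge_of_tendsto' hten main
  have : h z = I := by
    have := abs_nonneg (h z - I)
    have : |h z - I| = 0 := le_antisymm habs this
    linarith [abs_eq_zero.mp this]
  simp only [hh] at this
  linarith
end

section
/- Let f : [0,∞) → [0,∞) be non-decreasing and g, h : [0,∞) → ℝ both satisfy g(0) = h(0) and, for all 0 ≤ z ≤ z', z·(f(z') − f(z)) ≤ g(z') − g(z) ≤ z'·(f(z') − f(z)) and the same inequalities for h. Then g = h. -/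
/-- **Uniqueness of the Myerson payment rule.**
If `f : [0,∞) → [0,∞)` is non-decreasing and `g, h` both satisfy the payment
sandwich with respect to `f` and agree at `0`, then `g = h` on `[0,∞)`. -/
theorem myerson_payment_unique
    (f g h : ℝ → ℝ)
    (hf_nonneg : ∀ z, 0 ≤ z → 0 ≤ f z)
    (hf_mono : ∀ z z', 0 ≤ z → z ≤ z' → f z ≤ f z')
    (h0 : g 0 = h 0)
    (hsandwich_g : ∀ z z', 0 ≤ z → z ≤ z' →
      z * (f z' - f z) ≤ g z' - g z ∧ g z' - g z ≤ z' * (f z' - f z))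
    (hsandwich_h : ∀ z z', 0 ≤ z → z ≤ z' →
      z * (f z' - f z) ≤ h z' - h z ∧ h z' - h z ≤ z' * (f z' - f z)) :
    ∀ z, 0 ≤ z → g z = h z := by
  have key : ∀ a b, 0 ≤ a → a ≤ b →
      |(g b - h b) - (g a - h a)| ≤ (b - a) * (f b - f a) := by
    intro a b ha hab
    obtain ⟨g1, g2⟩ := hsandwich_g a b ha hab
    obtain ⟨h1, h2⟩ := hsandwich_h a b ha hab
    rw [abs_le]
    constructor <;> nlinarith
  intro z hz
  have hd0 : g 0 - h 0 = 0 := by linarith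
  have hle : ∀ ε : ℝ, 0 < ε → |g z - h z| ≤ ε := by
    intro ε hε
    obtain ⟨n, hn⟩ := exists_nat_gt (z * (f z - f 0) / ε)
    have hn0 : 0 < (n : ℝ) := by
      have h1 : 0 ≤ z * (f z - f 0) := by
        have := hf_mono 0 z le_rfl hz
        nlinarith
      have h2 : 0 ≤ z * (f z - f 0) / ε := div_nonneg h1 hε.le
      linarith
    have step : ∀ k : ℕ, (k : ℕ) ≤ n →
        |g ((k : ℝ) * z / n) - h ((k : ℝ) * z / n)| ≤
          (z / n) * (f ((k : ℝ) * z / n) - f 0) := by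
      intro k hk
      induction k with
      | zero =>
        simp only [Nat.cast_zero, zero_mul, zero_div]
        rw [hd0]
        simp
      | succ k ih =>
        have hk' : k ≤ n := Nat.le_of_succ_le hk
        have ih := ih hk'
        set a : ℝ := (k : ℝ) * z / n with ha_def
        set b : ℝ := ((k + 1 : ℕ) : ℝ) * z / n with hb_def
        have ha : 0 ≤ a := by positivity
        have hba : b - a = z / n := by
          rw [ha_def, hb_def]; push_cast; field_simp; ring
        have hab : a ≤ b := by
          have : 0 ≤ z / n := by positivity
          linarith
        have hkey := key a b ha hab
        rw [hba] at hkey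
        have htri : |g b - h b| ≤ |(g b - h b) - (g a - h a)| + |g a - h a| := by
          have := abs_sub_abs_le_abs_sub (g b - h b) (g a - h a)
          have := abs_add_le ((g b - h b) - (g a - h a)) (g a - h a)
          calc |g b - h b| = |((g b - h b) - (g a - h a)) + (g a - h a)| := by ring_nf
            _ ≤ _ := abs_add_le _ _
        calc |g b - h b| ≤ |(g b - h b) - (g a - h a)| + |g a - h a| := htri
          _ ≤ (z / n) * (f b - f a) + (z / n) * (f a - f 0) := add_le_add hkey ih
          _ = (z / n) * (f b - f 0) := by ring
    have hnz : ((n : ℝ)) * z / n = z := by field_simp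
    have := step n le_rfl
    rw [hnz] at this
    have hlt : (z / n) * (f z - f 0) ≤ ε := by
      rw [div_lt_iff₀ hε] at hn
      rw [div_mul_eq_mul_div, div_le_iff₀ hn0]
      nlinarith
    linarith
  by_contra hne
  have habs : 0 < |g z - h z| := by
    rcases lt_or_ge 0 |g z - h z| with h' | h'
    · exact h'
    · exact absurd (sub_eq_zero.mp (abs_nonpos_iff.mp h')) hne
  have := hle (|g z - h z| / 2) (by linarith)
  linarith
end

section
/- Let (x, p, μ) be a deterministic TFM satisfying UIC and 1-SCP. If a user i changes its bid from b_i to b'_i such that x_i(b_{-i}, b_i) = x_i(b_{-i}, b'_i), then the miner revenue is unchanged: μ(b_{-i}, b_i) = μ(b_{-i}, b'_i). -/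
/-- **Inconsequential bid changes do not affect miner revenue.**
For a deterministic TFM `(x, p, μ)` satisfying UIC and 1-SCP: if user `i` changes
its bid from `b i` to `r` without changing its confirmation status, the miner
revenue is unchanged. -/
theorem revenue_invariant_under_inconsequential_bid_change
    (m : ℕ) (x p : (Fin m → ℝ) → Fin m → ℝ) (μ : (Fin m → ℝ) → ℝ)
    -- deterministic TFM structure
    (hx01 : ∀ (b : Fin m → ℝ) (i : Fin m), x b i = 0 ∨ x b i = 1)
    (hple : ∀ (b : Fin m → ℝ) (i : Fin m), x b i = 1 → p b i ≤ b i)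
    (hp0 : ∀ (b : Fin m → ℝ) (i : Fin m), x b i = 0 → p b i = 0)
    (hμ : ∀ b : Fin m → ℝ, 0 ≤ μ b ∧ μ b ≤ ∑ i, p b i)
    -- UIC: truthful bidding is dominant for each user
    (hUIC : ∀ (b : Fin m → ℝ) (i : Fin m) (r : ℝ),
      b i * x (Function.update b i r) i - p (Function.update b i r) i
        ≤ b i * x b i - p b i)
    -- 1-SCP: the miner and one user cannot increase their joint utility by the
    -- user bidding untruthfully
    (hSCP : ∀ (b : Fin m → ℝ) (i : Fin m) (r : ℝ),
      μ (Function.update b i r)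
          + b i * x (Function.update b i r) i - p (Function.update b i r) i
        ≤ μ b + b i * x b i - p b i) :
    ∀ (b : Fin m → ℝ) (i : Fin m) (r : ℝ),
      x b i = x (Function.update b i r) i → μ b = μ (Function.update b i r) := by
  intro b i r hxeq
  set b' := Function.update b i r with hb'
  have hback : Function.update b' i (b i) = b := by
    rw [hb', Function.update_idem, Function.update_eq_self]
  have h1 := hUIC b i r
  have h2 := hUIC b' i (b i)
  rw [hback] at h2
  have hbi' : b' i = r := Function.update_self i r b
  rw [hbi'] at h2
  have hpeq : p b i = p b' i := by
    rw [← hxeq] at h1; rw [hxeq] at h2; linarith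
  have h3 := hSCP b i r
  have h4 := hSCP b' i (b i)
  rw [hback, hbi'] at h4
  rw [← hxeq] at h3
  rw [hxeq] at h4
  linarith
end

section
/- Let (x, p, μ) be a deterministic TFM satisfying UIC (hence obeying Myerson's Lemma) and 1-SCP. Then for every bid vector b and every user i, μ(b_{-i}, 0) = μ(b). Consequently any deterministic TFM that is UIC and 1-SCP has identically zero miner revenue: μ(b) = 0 for all b. -/
/-- Key one-dimensional lemma: for a single user's bid `r`, with allocation
`X r ∈ {0,1}`, payment `P r`, and miner revenue `F r`, UIC plus 1-SCP force the
miner revenue to be constant in that user's bid. -/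
lemma tfm_key_const (X P F : ℝ → ℝ)
    (h01 : ∀ r, X r = 0 ∨ X r = 1)
    (hle : ∀ r, X r = 1 → P r ≤ r)
    (h0 : ∀ r, X r = 0 → P r = 0)
    (hU : ∀ v r, v * X r - P r ≤ v * X v - P v)
    (hS : ∀ v r, F r + v * X r - P r ≤ F v + v * X v - P v) :
    ∀ s t, F s = F t := by
  -- revenue is constant on the unallocated region
  have hF0 : ∀ s t, X s = 0 → X t = 0 → F s = F t := by
    intro s t hs ht
    have h1 := hS s t; have h2 := hS t s
    rw [hs, ht, h0 s hs, h0 t ht] at h1 h2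
    nlinarith
  -- payments agree on the allocated region
  have hPeq : ∀ s t, X s = 1 → X t = 1 → P s = P t := by
    intro s t hs ht
    have h1 := hU s t; have h2 := hU t s
    rw [hs, ht] at h1 h2; linarith
  -- revenue is constant on the allocated region
  have hF1 : ∀ s t, X s = 1 → X t = 1 → F s = F t := by
    intro s t hs ht
    have h1 := hS s t; have h2 := hS t s
    rw [hs, ht, hPeq s t hs ht] at h1 h2
    linarith
  -- mixed case: s allocated, t not
  have hmix : ∀ s t, X s = 1 → X t = 0 → F s = F t := by
    intro s t hs ht
    set c := P s with hc
    -- any unallocated bid is ≤ c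
    have hun : ∀ r, X r = 0 → r ≤ c := by
      intro r hr
      have := hU r s
      rw [hs, hr, h0 r hr] at this
      linarith
    -- any allocated bid is ≥ c
    have hal : ∀ r, X r = 1 → c ≤ r := by
      intro r hr
      have := hPeq s r hs hr
      have := hle r hr
      linarith
    -- F t ≤ F s : deviate from value c+ε (allocated) down to t
    have hts : F t ≤ F s := by
      refine le_of_forall_pos_le_add ?_
      intro ε hε
      have hXr : X (c + ε) = 1 := by
        rcases h01 (c + ε) with h | h
        · exact absurd (hun _ h) (by linarith)
        · exact h
      have h1 := hS (c + ε) t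
      rw [hXr, ht, h0 t ht, hPeq (c + ε) s hXr hs, ← hc,
        hF1 (c + ε) s hXr hs] at h1
      linarith
    -- F s ≤ F t : deviate from value c-ε (unallocated) up to s
    have hst : F s ≤ F t := by
      refine le_of_forall_pos_le_add ?_
      intro ε hε
      have hXr : X (c - ε) = 0 := by
        rcases h01 (c - ε) with h | h
        · exact h
        · exact absurd (hal _ h) (by linarith)
      have h1 := hS (c - ε) s
      rw [hXr, hs, h0 (c - ε) hXr, ← hc, hF0 (c - ε) t hXr ht] at h1
      linarith
    linarith
  intro s t
  rcases h01 s with hs | hs <;> rcases h01 t with ht | ht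
  · exact hF0 s t hs ht
  · exact (hmix t s ht hs).symm
  · exact hmix s t hs ht
  · exact hF1 s t hs ht

/-- **Deterministic TFM: UIC + 1-SCP ⟹ zero miner revenue.**
Any deterministic TFM `(x, p, μ)` satisfying UIC and 1-SCP has miner revenue
unaffected by zeroing any single bid, and consequently has identically zero
miner revenue. -/
theorem deterministic_uic_scp_zero_miner_revenue
    (m : ℕ) (x p : (Fin m → ℝ) → Fin m → ℝ) (μ : (Fin m → ℝ) → ℝ)
    -- deterministic TFM structure
    (hx01 : ∀ (b : Fin m → ℝ) (i : Fin m), x b i = 0 ∨ x b i = 1)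
    (hple : ∀ (b : Fin m → ℝ) (i : Fin m), x b i = 1 → p b i ≤ b i)
    (hp0 : ∀ (b : Fin m → ℝ) (i : Fin m), x b i = 0 → p b i = 0)
    (hμ : ∀ b : Fin m → ℝ, 0 ≤ μ b ∧ μ b ≤ ∑ i, p b i)
    -- UIC
    (hUIC : ∀ (b : Fin m → ℝ) (i : Fin m) (r : ℝ),
      b i * x (Function.update b i r) i - p (Function.update b i r) i
        ≤ b i * x b i - p b i)
    -- 1-SCP
    (hSCP : ∀ (b : Fin m → ℝ) (i : Fin m) (r : ℝ),
      μ (Function.update b i r)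
          + b i * x (Function.update b i r) i - p (Function.update b i r) i
        ≤ μ b + b i * x b i - p b i) :
    (∀ (b : Fin m → ℝ) (i : Fin m), μ (Function.update b i 0) = μ b) ∧
      (∀ b : Fin m → ℝ, μ b = 0) := by
  have part1 : ∀ (b : Fin m → ℝ) (i : Fin m), μ (Function.update b i 0) = μ b := by
    intro b i
    have hconst := tfm_key_const
      (fun r => x (Function.update b i r) i)
      (fun r => p (Function.update b i r) i)
      (fun r => μ (Function.update b i r))
      (fun r => hx01 _ i)
      (fun r hr => by simpa using hple (Function.update b i r) i hr)
      (fun r hr => hp0 _ i hr)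
      (fun v r => by
        have := hUIC (Function.update b i v) i r
        simpa [Function.update_idem] using this)
      (fun v r => by
        have := hSCP (Function.update b i v) i r
        simpa [Function.update_idem] using this)
    have := hconst 0 (b i)
    simpa [Function.update_eq_self] using this
  refine ⟨part1, ?_⟩
  -- zeroing all bids one at a time
  have hzero : ∀ b : Fin m → ℝ, μ b = μ (fun _ => 0) := by
    intro b
    have key2 : ∀ s : Finset (Fin m),
        μ (fun j => if j ∈ s then b j else 0) = μ (fun _ => 0) := by
      intro s
      induction s using Finset.induction with
      | empty => simp
      | @insert i s hi ih =>
        have heq : (fun j => if j ∈ s then b j else 0)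
            = Function.update (fun j => if j ∈ insert i s then b j else 0) i 0 := by
          funext j
          by_cases hj : j = i
          · subst hj; simp [Function.update_self, hi]
          · simp [Function.update_of_ne hj, Finset.mem_insert, hj]
        have := part1 (fun j => if j ∈ insert i s then b j else 0) i
        rw [← heq] at this
        rw [← this, ih]
    have := key2 Finset.univ
    simpa using this
  intro b
  rw [hzero b]
  -- at the all-zero bid, payments are ≤ 0 and μ ≥ 0, μ ≤ ∑ p
  have hps : ∀ i : Fin m, p (fun _ => 0) i ≤ 0 := by
    intro i
    rcases hx01 (fun _ => 0) i with h | h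
    · rw [hp0 _ i h]
    · simpa using hple (fun _ => 0) i h
  have h1 := (hμ (fun _ => 0)).1
  have h2 := (hμ (fun _ => 0)).2
  have h3 : (∑ i, p (fun _ => 0) i) ≤ 0 :=
    Finset.sum_nonpos fun i _ => hps i
  linarith
end

section
/- Suppose the block size is a finite B, so that under any bid vector at most B bids can be included, and hence among any n > B equal bids at least one has inclusion (hence confirmation) probability at most B/n. Then the only (possibly randomized) TFM satisfying UIC and 1-SCP is trivial: it confirms no transaction with positive probability (x ≡ 0) and pays the miner nothing (μ ≡ 0). -/
/-- The (expected) joint utility of the coalition of the miner and the users in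
`C` when the miner mines a block of `n` slots: slot `s` carries bid `bids s`
and is either a real user's transaction (`owner s = some u`; non-coalition
users bid truthfully) or a fake transaction of the miner (`owner s = none`,
true value `0`). Here `v` are the users' true values and the utility notion is
the standard one (value times confirmation probability, minus expected
payment, plus miner revenue). -/
noncomputable def coalitionUtility
    (x p : (n : ℕ) → (Fin n → ℝ) → Fin n → ℝ)
    (μ : (n : ℕ) → (Fin n → ℝ) → ℝ)
    (m : ℕ) (v : Fin m → ℝ) (C : Finset (Fin m))
    (n : ℕ) (owner : Fin n → Option (Fin m)) (bids : Fin n → ℝ) : ℝ :=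
  μ n bids + ∑ s : Fin n,
    (match owner s with
     | some u => if u ∈ C then v u * x n bids s - p n bids s else 0
     | none => 0 * x n bids s - p n bids s)

/-!
UIC and 1-SCP together give `|μ(b[i ↦ s]) - μ(b[i ↦ t])| ≤ (s - t) (xᵢ(s) - xᵢ(t))`. Along a fine
subdivision of `[t, s]` the increments of `xᵢ ∈ [0, 1]` telescope, so `μ` does not depend on any
single bid, hence on no bid at all, and `μ ≡ μ(0) = 0`. With a revenue-free miner, a confirmed
transaction can be handed over to one of `n` extra users of higher value, one of whom is confirmed
with probability at most `B / n`; letting `n → ∞` gives `x ≡ 0`.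
-/

open Function Filter

lemma nonpos_of_forall_le_div_nat {a C : ℝ} (h : ∀ n : ℕ, 0 < n → a ≤ C / n) : a ≤ 0 :=
  ge_of_tendsto (tendsto_const_div_atTop_nhds_zero_nat C) (eventually_atTop.2 ⟨1, h⟩)

lemma abs_sub_le_mul_sub_of_step {g X : ℝ → ℝ}
    (h : ∀ s t, |g s - g t| ≤ (s - t) * (X s - X t)) (a : ℝ) {δ : ℝ} (hδ : 0 ≤ δ) :
    ∀ k : ℕ, |g (a + k * δ) - g a| ≤ δ * (X (a + k * δ) - X a)
  | 0 => by simp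
  | k + 1 => by
    have hstep := h (a + (k + 1 : ℕ) * δ) (a + k * δ)
    have hprev := abs_sub_le_mul_sub_of_step h a hδ k
    have hδ' : a + (k + 1 : ℕ) * δ - (a + k * δ) = δ := by push_cast; ring
    rw [hδ'] at hstep
    calc |g (a + (k + 1 : ℕ) * δ) - g a|
        ≤ |g (a + (k + 1 : ℕ) * δ) - g (a + k * δ)| + |g (a + k * δ) - g a| :=
          abs_sub_le _ _ _
      _ ≤ δ * (X (a + (k + 1 : ℕ) * δ) - X (a + k * δ)) + δ * (X (a + k * δ) - X a) :=
          add_le_add hstep hprev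
      _ = δ * (X (a + (k + 1 : ℕ) * δ) - X a) := by ring

lemma eq_of_abs_sub_le_mul_sub {g X : ℝ → ℝ} {C : ℝ} (hX : ∀ s t, X s - X t ≤ C)
    (h : ∀ s t, |g s - g t| ≤ (s - t) * (X s - X t)) (a c : ℝ) : g c = g a := by
  wlog hac : a ≤ c generalizing a c
  · exact (this c a (le_of_not_ge hac)).symm
  have hmesh : ∀ k : ℕ, 0 < k → |g c - g a| ≤ (c - a) * C / k := by
    intro k hk
    have hk' : (0 : ℝ) < k := Nat.cast_pos.2 hk
    have hδ : 0 ≤ (c - a) / k := div_nonneg (sub_nonneg.2 hac) hk'.le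
    have hend : a + k * ((c - a) / k) = c := by field_simp; ring
    have := abs_sub_le_mul_sub_of_step h a hδ k
    rw [hend] at this
    calc |g c - g a| ≤ (c - a) / k * (X c - X a) := this
      _ ≤ (c - a) / k * C := mul_le_mul_of_nonneg_left (hX c a) hδ
      _ = (c - a) * C / k := by ring
  exact sub_eq_zero.1 (abs_nonpos_iff.1 (nonpos_of_forall_le_div_nat hmesh))

lemma eq_of_forall_update_eq {ι α β : Type*} [Fintype ι] [DecidableEq ι] {f : (ι → α) → β}
    (hf : ∀ b i r, f (update b i r) = f b) (b c : ι → α) : f b = f c := by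
  have hpiecewise : ∀ S : Finset ι, f (S.piecewise b c) = f c := by
    intro S
    induction S using Finset.induction_on with
    | empty => simp
    | insert j S _ ih => rw [Finset.piecewise_insert, hf, ih]
  simpa using hpiecewise Finset.univ

lemma exists_natAdd_le_div {m n : ℕ} (hn : 0 < n) {f : Fin (m + n) → ℝ} (hf : ∀ j, 0 ≤ f j)
    {B : ℝ} (hB : ∑ j, f j ≤ B) : ∃ k : Fin n, f (Fin.natAdd m k) ≤ B / n := by
  have hn' : (n : ℝ) ≠ 0 := Nat.cast_ne_zero.2 hn.ne'
  have hsum : ∑ k : Fin n, f (Fin.natAdd m k) ≤ ∑ _k : Fin n, B / n := by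
    rw [Fin.sum_univ_add] at hB
    have : 0 ≤ ∑ j : Fin m, f (Fin.castAdd n j) := Finset.sum_nonneg fun j _ => hf _
    simp only [Finset.sum_const, Finset.card_univ, Fintype.card_fin, nsmul_eq_mul]
    rw [mul_div_cancel₀ _ hn']
    linarith
  obtain ⟨k, -, hk⟩ := Finset.exists_le_of_sum_le ⟨⟨0, hn⟩, Finset.mem_univ _⟩ hsum
  exact ⟨k, hk⟩

section Mechanism

variable {x p : (n : ℕ) → (Fin n → ℝ) → Fin n → ℝ} {μ : (n : ℕ) → (Fin n → ℝ) → ℝ}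

def IsUIC (x p : (n : ℕ) → (Fin n → ℝ) → Fin n → ℝ) : Prop :=
  ∀ n (b : Fin n → ℝ) (i : Fin n) (r : ℝ),
    b i * x n (update b i r) i - p n (update b i r) i ≤ b i * x n b i - p n b i

def IsOneSCP (x p : (n : ℕ) → (Fin n → ℝ) → Fin n → ℝ) (μ : (n : ℕ) → (Fin n → ℝ) → ℝ) :
    Prop :=
  ∀ (m : ℕ) (v : Fin m → ℝ) (i : Fin m) (n : ℕ) (owner : Fin n → Option (Fin m))
    (bids : Fin n → ℝ),
    (∀ s t u, owner s = some u → owner t = some u → s = t) →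
    (∀ s u, owner s = some u → u ≠ i → bids s = v u) →
    coalitionUtility x p μ m v {i} n owner bids
      ≤ coalitionUtility x p μ m v {i} m (fun s => some s) v

lemma coalitionUtility_of_injective {m n : ℕ} (v : Fin m → ℝ) {e : Fin n → Fin m}
    (he : Injective e) {s₀ : Fin n} {i : Fin m} (hs₀ : e s₀ = i) (bids : Fin n → ℝ) :
    coalitionUtility x p μ m v {i} n (fun s => some (e s)) bids
      = μ n bids + (v i * x n bids s₀ - p n bids s₀) := by
  unfold coalitionUtility
  rw [Fintype.sum_eq_single s₀ fun s hs => ?_]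
  · simp [hs₀]
  · have : e s ≠ i := hs₀ ▸ he.ne hs
    simp [this]

lemma IsOneSCP.le_truthful {m n : ℕ} (hSCP : IsOneSCP x p μ) (v : Fin m → ℝ) {e : Fin n → Fin m}
    (he : Injective e) {s₀ : Fin n} {i : Fin m} (hs₀ : e s₀ = i) {bids : Fin n → ℝ}
    (hbids : ∀ s, s ≠ s₀ → bids s = v (e s)) :
    μ n bids + (v i * x n bids s₀ - p n bids s₀) ≤ μ m v + (v i * x m v i - p m v i) := by
  have h := hSCP m v i n (fun s => some (e s)) bids
    (fun s t u hs ht => he (Option.some_injective _ (hs.trans ht.symm)))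
    (fun s u hs hu => by
      cases hs
      exact hbids s fun h => hu (h ▸ hs₀))
  rwa [coalitionUtility_of_injective v he hs₀,
    coalitionUtility_of_injective (e := fun s => s) v (fun _ _ h => h) rfl] at h

/-- 1-SCP bounds each direction of the revenue change by a slack of the UIC inequality, and the
two slacks add up to `(s - t) (x(s) - x(t))`. -/
lemma abs_sub_le_of_isUIC_of_isOneSCP (hUIC : IsUIC x p) (hSCP : IsOneSCP x p μ) {m : ℕ}
    (v : Fin m → ℝ) (i : Fin m) (s t : ℝ) :
    |μ m (update v i s) - μ m (update v i t)|
      ≤ (s - t) * (x m (update v i s) i - x m (update v i t) i) := by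
  have hscp : ∀ s t : ℝ, μ m (update v i t) + (s * x m (update v i t) i - p m (update v i t) i)
      ≤ μ m (update v i s) + (s * x m (update v i s) i - p m (update v i s) i) := by
    intro s t
    have h := hSCP.le_truthful (update v i s) injective_id (s₀ := i) rfl (bids := update v i t)
      fun s' hs' => by simp [hs']
    simpa using h
  have huic : ∀ s t : ℝ, s * x m (update v i t) i - p m (update v i t) i
      ≤ s * x m (update v i s) i - p m (update v i s) i := by
    intro s t
    simpa using hUIC m (update v i s) i t
  rw [abs_le]
  constructor
  · linarith [hscp s t, huic t s]
  · linarith [hscp t s, huic s t]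

lemma mu_update_eq (hx : ∀ n (b : Fin n → ℝ) (i : Fin n), 0 ≤ x n b i ∧ x n b i ≤ 1)
    (hUIC : IsUIC x p) (hSCP : IsOneSCP x p μ) {m : ℕ} (v : Fin m → ℝ) (i : Fin m) (r : ℝ) :
    μ m (update v i r) = μ m v := by
  have hX : ∀ s t, x m (update v i s) i - x m (update v i t) i ≤ 1 := fun s t => by
    linarith [(hx m (update v i s) i).2, (hx m (update v i t) i).1]
  simpa using
    eq_of_abs_sub_le_mul_sub hX (abs_sub_le_of_isUIC_of_isOneSCP hUIC hSCP v i) (v i) r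

lemma mu_eq_zero (hx : ∀ n (b : Fin n → ℝ) (i : Fin n), 0 ≤ x n b i ∧ x n b i ≤ 1)
    (hp : ∀ n (b : Fin n → ℝ) (i : Fin n), 0 ≤ p n b i ∧ p n b i ≤ b i * x n b i)
    (hμ : ∀ n (b : Fin n → ℝ), 0 ≤ μ n b ∧ μ n b ≤ ∑ i, p n b i)
    (hUIC : IsUIC x p) (hSCP : IsOneSCP x p μ) {m : ℕ} (b : Fin m → ℝ) : μ m b = 0 := by
  rw [eq_of_forall_update_eq (mu_update_eq hx hUIC hSCP) b 0]
  have hp0 : ∑ i, p m 0 i ≤ 0 :=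
    Finset.sum_nonpos fun i _ => by simpa using (hp m 0 i).2
  linarith [hμ m 0]

/-- Add `n` users of value `w = |b i| + 1` to `b`; one of them, `j`, is confirmed with probability
at most `B / n`. The miner puts `j`'s transaction, bidding `b i`, in place of user `i`'s: the
coalition gains at least `(w - b i) · x m b i ≥ x m b i`, while honestly `j` gets at most
`w · B / n`. -/
lemma x_le_div (B : ℝ) (hx : ∀ n (b : Fin n → ℝ) (i : Fin n), 0 ≤ x n b i ∧ x n b i ≤ 1)
    (hp : ∀ n (b : Fin n → ℝ) (i : Fin n), 0 ≤ p n b i ∧ p n b i ≤ b i * x n b i)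
    (hμ : ∀ n (b : Fin n → ℝ), 0 ≤ μ n b ∧ μ n b ≤ ∑ i, p n b i)
    (hblock : ∀ n (b : Fin n → ℝ), ∑ i, x n b i ≤ B)
    (hUIC : IsUIC x p) (hSCP : IsOneSCP x p μ) {m : ℕ} (b : Fin m → ℝ) (i : Fin m)
    {n : ℕ} (hn : 0 < n) : x m b i ≤ (|b i| + 1) * B / n := by
  set w := |b i| + 1
  set v : Fin (m + n) → ℝ := Fin.append b fun _ => w
  obtain ⟨k, hk⟩ := exists_natAdd_le_div hn (fun j => (hx _ v j).1) (hblock _ v)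
  set e : Fin m → Fin (m + n) := fun s => if s = i then Fin.natAdd m k else Fin.castAdd n s
  have hcast : ∀ s, Fin.castAdd n s ≠ Fin.natAdd m k := fun s h => by
    have := congrArg Fin.val h
    simp only [Fin.val_castAdd, Fin.val_natAdd] at this
    omega
  have he : Injective e := by
    intro s t hst
    by_cases hs : s = i <;> by_cases ht : t = i <;> simp only [e, hs, ht, if_true, if_false] at hst
    · exact hs.trans ht.symm
    · exact absurd hst.symm (hcast t)
    · exact absurd hst (hcast s)
    · exact Fin.castAdd_injective m n hst
  have h := hSCP.le_truthful v he (s₀ := i) (i := Fin.natAdd m k) (by simp [e]) (bids := b)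
    fun s hs => by simp [e, hs, v]
  have hvk : v (Fin.natAdd m k) = w := Fin.append_right _ _ _
  rw [hvk, mu_eq_zero hx hp hμ hUIC hSCP, mu_eq_zero hx hp hμ hUIC hSCP] at h
  have hw : 0 ≤ w := by positivity
  have hwb : 1 ≤ w - b i := by linarith [le_abs_self (b i)]
  have hxi := (hx m b i).1
  calc x m b i ≤ (w - b i) * x m b i := le_mul_of_one_le_left hxi hwb
    _ ≤ w * x (m + n) v (Fin.natAdd m k) := by
        nlinarith [(hp m b i).2, (hp (m + n) v (Fin.natAdd m k)).1]
    _ ≤ w * (B / n) := mul_le_mul_of_nonneg_left hk hw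
    _ = w * B / n := by ring

end Mechanism

/-- **Finite block size: UIC + 1-SCP force the trivial TFM.**
Suppose each block confirms at most `B` transactions in expectation
(`Σᵢ xᵢ(b) ≤ B` for all bid vectors of all lengths).  If the (possibly
randomized) TFM family `(x, p, μ)` is UIC and 1-SCP — where the coalition of
the miner and a single user may have the user bid untruthfully and the miner
assemble an arbitrary block out of real users' transactions and fake
transactions — then the mechanism is trivial: no transaction is ever confirmed
with positive probability and the miner is always paid nothing. -/
theorem finite_block_size_trivial_mechanism
    (B : ℕ)
    (x p : (n : ℕ) → (Fin n → ℝ) → Fin n → ℝ)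
    (μ : (n : ℕ) → (Fin n → ℝ) → ℝ)
    (hx : ∀ n (b : Fin n → ℝ) (i : Fin n), 0 ≤ x n b i ∧ x n b i ≤ 1)
    (hp : ∀ n (b : Fin n → ℝ) (i : Fin n), 0 ≤ p n b i ∧ p n b i ≤ b i * x n b i)
    (hμ : ∀ n (b : Fin n → ℝ), 0 ≤ μ n b ∧ μ n b ≤ ∑ i, p n b i)
    -- finite block size: at most B transactions confirmed (in expectation)
    (hblock : ∀ n (b : Fin n → ℝ), ∑ i, x n b i ≤ (B : ℝ))
    -- UIC
    (hUIC : ∀ n (b : Fin n → ℝ) (i : Fin n) (r : ℝ),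
      b i * x n (Function.update b i r) i - p n (Function.update b i r) i
        ≤ b i * x n b i - p n b i)
    -- 1-SCP
    (hSCP : ∀ (m : ℕ) (v : Fin m → ℝ) (i : Fin m)
        (n : ℕ) (owner : Fin n → Option (Fin m)) (bids : Fin n → ℝ),
      (∀ s t u, owner s = some u → owner t = some u → s = t) →
      (∀ s u, owner s = some u → u ≠ i → bids s = v u) →
      coalitionUtility x p μ m v {i} n owner bids
        ≤ coalitionUtility x p μ m v {i} m (fun s => some s) v) :
    ∀ (m : ℕ) (b : Fin m → ℝ), μ m b = 0 ∧ ∀ i, x m b i = 0 := by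
  intro m b
  refine ⟨mu_eq_zero hx hp hμ hUIC hSCP b, fun i => le_antisymm ?_ (hx m b i).1⟩
  exact nonpos_of_forall_le_div_nat fun n hn => x_le_div B hx hp hμ hblock hUIC hSCP b i hn
end

section
/- In the burning second-price auction with parameters B = k + k', 1 ≤ k' ≤ ⌊γk/c⌋, discount γ ∈ (0,1], coalition bound c ≥ 1, truthful bidding is a dominant strategy for each user under γ-strict utility: for any sorted bid vector b_1 ≥ … ≥ b_m with user i bidding its true value, any deviation to another bid b'_i does not increase user i's expected γ-strict utility. -/
/-- Expected `γ`-strict utility of a user with true value `v` bidding `β` in the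
burning second-price auction, where `o j` is the `(j+1)`-st highest bid among
the other users (sorted descending, empty slots counted as `0`-bids).  The user
is among the top `k` included bids iff it beats the `k`-th highest other bid;
in that case it is confirmed with probability `⌊γk/c⌋/k`, paying the
`(k+1)`-st included bid `o (k-1)` when confirmed, and when unconfirmed an
overbid costs `γ·(β − v)`. -/
noncomputable def bspUserUtility (k c : ℕ) (γ : ℝ) (o : ℕ → ℝ) (v β : ℝ) : ℝ :=
  if o (k - 1) < β then
    ((⌊γ * k / c⌋₊ : ℝ) / k) * (v - o (k - 1))
      - (1 - (⌊γ * k / c⌋₊ : ℝ) / k) * (γ * max (β - v) 0)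
  else
    -(γ * max (β - v) 0)

/-- **The burning second-price auction is UIC under `γ`-strict utility.**
With parameters `B = k + k'`, `1 ≤ k' ≤ ⌊γk/c⌋`, `γ ∈ (0,1]`, `c ≥ 1`:
for any (sorted, nonnegative) bids of the other users and any user bidding its
true value `v ≥ 0`, no deviation to another bid `β` increases the user's
expected `γ`-strict utility. -/
theorem burning_second_price_uic
    (k k' c : ℕ) (γ : ℝ)
    (hγ0 : 0 < γ) (hγ1 : γ ≤ 1) (hc : 1 ≤ c) (hk : 1 ≤ k)
    (hk'1 : 1 ≤ k') (hk'2 : k' ≤ ⌊γ * k / c⌋₊)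
    (o : ℕ → ℝ)
    (hosorted : ∀ a b : ℕ, a ≤ b → o b ≤ o a)
    (hononneg : ∀ j, 0 ≤ o j)
    (v β : ℝ) (hv : 0 ≤ v) :
    bspUserUtility k c γ o v β ≤ bspUserUtility k c γ o v v := by
  have hkR : (0 : ℝ) < k := by exact_mod_cast hk
  have hcR : (1 : ℝ) ≤ c := by exact_mod_cast hc
  set p : ℝ := (⌊γ * k / c⌋₊ : ℝ) / k with hp
  have hp0 : 0 ≤ p := by positivity
  have hp1 : p ≤ 1 := by
    have h1 : (⌊γ * k / c⌋₊ : ℝ) ≤ γ * k / c :=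
      Nat.floor_le (by positivity)
    have h2 : γ * k / c ≤ k := by
      rw [div_le_iff₀ (by linarith)]
      nlinarith
    rw [hp, div_le_one hkR]
    linarith
  set t : ℝ := o (k - 1) with ht
  have ht0 : 0 ≤ t := hononneg _
  have hmax0 : (0:ℝ) ≤ max (β - v) 0 := le_max_right _ _
  unfold bspUserUtility
  rw [← hp, ← ht]
  have hmaxv : max (v - v) 0 = 0 := by simp
  rw [hmaxv]
  have h1p : 0 ≤ 1 - p := by linarith
  have hA : 0 ≤ (1 - p) * (γ * max (β - v) 0) := by positivity
  have hB : 0 ≤ γ * max (β - v) 0 := by positivity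
  by_cases htv : t < v
  · rw [if_pos htv]
    have hpt : 0 ≤ p * (v - t) := by nlinarith
    by_cases htb : t < β
    · rw [if_pos htb]; linarith
    · rw [if_neg htb]; linarith
  · push_neg at htv
    rw [if_neg (not_lt.mpr htv)]
    by_cases htb : t < β
    · rw [if_pos htb]
      have hbv : v ≤ β := le_trans htv htb.le
      have hm : max (β - v) 0 = β - v := max_eq_left (by linarith)
      rw [hm]
      have hpt : p * (v - t) ≤ 0 := mul_nonpos_of_nonneg_of_nonpos hp0 (by linarith)
      have : 0 ≤ (1 - p) * (γ * (β - v)) := mul_nonneg h1p (mul_nonneg hγ0.le (by linarith))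
      linarith
    · rw [if_neg htb]; linarith
end

section
/- Consider the burning second-price auction with block size B = k + k', included bids e_1 ≥ … ≥ e_B, miner revenue γ·(e_{k+1} + … + e_B), and γ-strict utility in which an injected fake bid of amount f costs the miner γ·f if unconfirmed and costs the (k+1)-st included price if confirmed (confirmation probability γ/c for bids among the top k). Then replacing any included bid e_i by a fake bid f never increases the miner's expected utility. -/
open Finset in
lemma bsp_filter_eq_Ici {B k : ℕ} (hkB : k < B) :
    Finset.univ.filter (fun t : Fin B => k ≤ (t : ℕ)) = Finset.Ici ⟨k, hkB⟩ := by
  ext t; simp [Fin.le_def]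

open Finset in
lemma bsp_tail_min {B k : ℕ} (hkB : k < B) (e' : Fin B → ℝ)
    (hs : ∀ a b : Fin B, a ≤ b → e' b ≤ e' a)
    (U : Finset (Fin B)) (hU : U.card = B - k) :
    ∑ t ∈ Finset.univ.filter (fun t : Fin B => k ≤ (t : ℕ)), e' t ≤ ∑ t ∈ U, e' t := by
  set S := Finset.univ.filter (fun t : Fin B => k ≤ (t : ℕ)) with hS
  have hcardS : S.card = B - k := by
    rw [hS, bsp_filter_eq_Ici hkB, Fin.card_Ici]
  have hsplitS : ∑ t ∈ S, e' t = ∑ t ∈ S ∩ U, e' t + ∑ t ∈ S \ U, e' t := by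
    rw [Finset.sum_inter_add_sum_sdiff]
  have hsplitU : ∑ t ∈ U, e' t = ∑ t ∈ S ∩ U, e' t + ∑ t ∈ U \ S, e' t := by
    rw [Finset.inter_comm, Finset.sum_inter_add_sum_sdiff]
  have hcard : (S \ U).card = (U \ S).card := by
    have h1 := Finset.card_sdiff_add_card_inter S U
    have h2 := Finset.card_sdiff_add_card_inter U S
    rw [Finset.inter_comm U S] at h2
    omega
  have h1 : ∑ t ∈ S \ U, e' t ≤ (S \ U).card • e' ⟨k, hkB⟩ := by
    apply Finset.sum_le_card_nsmul
    intro t ht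
    have : k ≤ (t : ℕ) := by
      have := (Finset.mem_sdiff.mp ht).1
      rw [hS] at this
      simpa using this
    exact hs _ _ (by exact this)
  have h2 : (U \ S).card • e' ⟨k, hkB⟩ ≤ ∑ t ∈ U \ S, e' t := by
    apply Finset.card_nsmul_le_sum
    intro t ht
    have : (t : ℕ) < k := by
      have := (Finset.mem_sdiff.mp ht).2
      rw [hS] at this
      simpa using this
    exact hs t ⟨k, hkB⟩ (le_of_lt this)
  rw [hsplitS, hsplitU]
  have := hcard ▸ h1
  linarith [le_trans this h2]
/-- **Injecting a fake bid never profits the miner in the burning second-price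
auction (MIC case analysis).**
The block has `B` included bids `e 0 ≥ e 1 ≥ …` (0-indexed) and the miner's
honest revenue is `γ·(e_{k+1} + … + e_B)` (i.e. `γ·∑_{t ≥ k} e t` 0-indexed).
If the miner replaces the included bid at position `i` by a fake bid `f`, and
`e'` is the sorted (descending) rearrangement of the resulting bids with the
fake bid sitting at position `j'`, then the new revenue minus the expected cost
of the fake bid — `(γ/c)·e'_{k+1} + (1 − γ/c)·γ·f` if the fake bid is among the
top `k` (confirmation probability `γ/c`, paying the `(k+1)`-st included price),
and `γ·f` otherwise — is at most the honest revenue. -/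
theorem bsp_fake_injection_not_profitable
    (B k c : ℕ) (γ : ℝ)
    (hγ0 : 0 < γ) (hγ1 : γ ≤ 1) (hc : 1 ≤ c) (hk : 1 ≤ k) (hkB : k < B)
    (e : Fin B → ℝ)
    (hesorted : ∀ a b : Fin B, a ≤ b → e b ≤ e a)
    (henonneg : ∀ a, 0 ≤ e a)
    (i : Fin B) (f : ℝ) (hf : 0 ≤ f)
    (σ : Equiv.Perm (Fin B)) (e' : Fin B → ℝ)
    (he' : e' = Function.update e i f ∘ σ)
    (he'sorted : ∀ a b : Fin B, a ≤ b → e' b ≤ e' a)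
    (j' : Fin B) (hj' : σ j' = i) :
    γ * ∑ t ∈ Finset.univ.filter (fun t : Fin B => k ≤ (t : ℕ)), e' t
        - (if (j' : ℕ) < k
            then (γ / c) * e' ⟨k, hkB⟩ + (1 - γ / c) * (γ * f)
            else γ * f)
      ≤ γ * ∑ t ∈ Finset.univ.filter (fun t : Fin B => k ≤ (t : ℕ)), e t := by
  have hcR : (1:ℝ) ≤ (c:ℝ) := by exact_mod_cast hc
  have hc0 : (0:ℝ) < (c:ℝ) := lt_of_lt_of_le one_pos hcR
  have hgc0 : 0 ≤ γ / c := by positivity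
  have hgc1 : γ / c ≤ 1 := (div_le_one hc0).mpr (le_trans hγ1 hcR)
  set g := Function.update e i f with hgdef
  set S := Finset.univ.filter (fun t : Fin B => k ≤ (t : ℕ)) with hSdef
  have hScard : S.card = B - k := by rw [hSdef, bsp_filter_eq_Ici hkB, Fin.card_Ici]
  have hmemS : ∀ t : Fin B, t ∈ S ↔ k ≤ (t : ℕ) := by intro t; simp [hSdef]
  have hgapp : ∀ t : Fin B, t ≠ i → g t = e t := fun t ht => Function.update_of_ne ht _ _
  have hgi : g i = f := Function.update_self _ _ _
  have hgnn : ∀ t, 0 ≤ g t := by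
    intro t
    by_cases ht : t = i
    · rw [ht, hgi]; exact hf
    · rw [hgapp t ht]; exact henonneg t
  have he'g : ∀ t, e' t = g (σ t) := by intro t; rw [he']; rfl
  have he'symm : ∀ t, e' (σ.symm t) = g t := by intro t; rw [he'g]; simp
  have he'nn : ∀ t, 0 ≤ e' t := fun t => (he'g t) ▸ hgnn (σ t)
  have hkey : ∀ T : Finset (Fin B), T.card = B - k → ∑ t ∈ S, e' t ≤ ∑ u ∈ T, g u := by
    intro T hT
    have h1 : ∑ u ∈ T, g u = ∑ a ∈ T.image σ.symm, e' a := by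
      rw [Finset.sum_image (fun a _ b _ h => σ.symm.injective h)]
      exact Finset.sum_congr rfl (fun u _ => (he'symm u).symm)
    rw [h1, hSdef]
    exact bsp_tail_min hkB e' he'sorted _
      (by rw [Finset.card_image_of_injective _ σ.symm.injective, hT])
  have hlt : ∀ a b : Fin B, e' b < e' a → a < b := by
    intro a b h
    by_contra hba
    exact absurd (he'sorted b a (not_lt.mp hba)) (not_le.mpr h)
  have he'j' : e' j' = f := by rw [he'g, hj', hgi]
  by_cases hj : (j' : ℕ) < k
  · by_cases hi : (i : ℕ) < k
    · -- Case B: fake confirmed, replaced a top-k bid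
      have hiS : i ∉ S := by rw [hmemS]; omega
      have hA : ∑ t ∈ S, e' t ≤ ∑ t ∈ S, e t := by
        have h1 := hkey S hScard
        have h2 : ∑ u ∈ S, g u = ∑ u ∈ S, e u :=
          Finset.sum_congr rfl (fun t ht => hgapp t (fun h => hiS (h ▸ ht)))
        linarith
      simp only [if_pos hj]
      nlinarith [mul_nonneg hgc0 (he'nn ⟨k, hkB⟩),
        mul_nonneg (mul_nonneg (sub_nonneg.mpr hgc1) hγ0.le) hf,
        mul_le_mul_of_nonneg_left hA hγ0.le]
    · -- Case C: fake confirmed, replaced a bottom bid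
      set K1 : Fin B := ⟨k - 1, by omega⟩ with hK1def
      have hK1i : K1 ≠ i := by
        intro h
        have : (K1 : ℕ) = (i : ℕ) := by rw [h]
        simp [hK1def] at this
        omega
      have hfK : e K1 ≤ f := by
        by_contra hfm
        push_neg at hfm
        have hsub : (Finset.Iio (⟨k, hkB⟩ : Fin B)).image σ.symm ⊆ Finset.Iio j' := by
          intro a ha
          obtain ⟨t, ht, rfl⟩ := Finset.mem_image.mp ha
          have htk : (t : ℕ) < k := by simpa [Fin.lt_def] using Finset.mem_Iio.mp ht
          have hti : t ≠ i := fun h => hi (h ▸ htk)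
          have h1 : e' (σ.symm t) = e t := by rw [he'symm, hgapp t hti]
          have h2 : e' j' < e' (σ.symm t) := by
            rw [h1, he'j']
            exact lt_of_lt_of_le hfm (hesorted t K1 (by rw [Fin.le_def]; simp [hK1def]; omega))
          exact Finset.mem_Iio.mpr (hlt _ _ h2)
        have hcard := Finset.card_le_card hsub
        rw [Finset.card_image_of_injective _ σ.symm.injective, Fin.card_Iio, Fin.card_Iio] at hcard
        simp at hcard
        omega
      have hek : e K1 ≤ e' ⟨k, hkB⟩ := by
        by_contra hekn
        push_neg at hekn
        have hsub : (insert i (Finset.Iio (⟨k, hkB⟩ : Fin B))).image σ.symm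
            ⊆ Finset.Iio (⟨k, hkB⟩ : Fin B) := by
          intro a ha
          obtain ⟨t, ht, rfl⟩ := Finset.mem_image.mp ha
          have hgt : e K1 ≤ g t := by
            rcases Finset.mem_insert.mp ht with h | h
            · rw [h, hgi]; exact hfK
            · have htk : (t : ℕ) < k := by simpa [Fin.lt_def] using Finset.mem_Iio.mp h
              have hti : t ≠ i := fun h' => hi (h' ▸ htk)
              rw [hgapp t hti]
              exact hesorted t K1 (by rw [Fin.le_def]; simp [hK1def]; omega)
          have h2 : e' ⟨k, hkB⟩ < e' (σ.symm t) := by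
            rw [he'symm]
            exact lt_of_lt_of_le hekn hgt
          exact Finset.mem_Iio.mpr (hlt _ _ h2)
        have hiIio : i ∉ Finset.Iio (⟨k, hkB⟩ : Fin B) := by
          simp [Finset.mem_Iio, Fin.lt_def]
          omega
        have hcard := Finset.card_le_card hsub
        rw [Finset.card_image_of_injective _ σ.symm.injective,
          Finset.card_insert_of_notMem hiIio, Fin.card_Iio] at hcard
        omega
      have hiS : i ∈ S := by rw [hmemS]; omega
      have hK1S : K1 ∉ S.erase i := by
        intro h
        have := (Finset.mem_erase.mp h).2
        rw [hmemS] at this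
        simp [hK1def] at this
        omega
      have hTcard : (insert K1 (S.erase i)).card = B - k := by
        rw [Finset.card_insert_of_notMem hK1S, Finset.card_erase_of_mem hiS, hScard]
        omega
      have hsum : ∑ u ∈ insert K1 (S.erase i), g u = e K1 + (∑ t ∈ S, e t - e i) := by
        rw [Finset.sum_insert hK1S]
        have h1 : g K1 = e K1 := hgapp K1 hK1i
        have h2 : ∑ u ∈ S.erase i, g u = ∑ u ∈ S.erase i, e u :=
          Finset.sum_congr rfl (fun t ht => hgapp t (Finset.mem_erase.mp ht).1)
        have h3 : e i + ∑ u ∈ S.erase i, e u = ∑ u ∈ S, e u := Finset.add_sum_erase S e hiS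
        rw [h1, h2]
        linarith
      have hA : ∑ t ∈ S, e' t ≤ ∑ t ∈ S, e t + e K1 := by
        have h1 := hkey _ hTcard
        rw [hsum] at h1
        linarith [henonneg i]
      simp only [if_pos hj]
      nlinarith [mul_nonneg hgc0 (sub_nonneg.mpr hek),
        mul_nonneg (mul_nonneg (sub_nonneg.mpr hgc1) hγ0.le) (sub_nonneg.mpr hfK),
        mul_nonneg (mul_nonneg hgc0 (sub_nonneg.mpr hγ1)) (henonneg K1),
        mul_le_mul_of_nonneg_left hA hγ0.le]
  · -- Case A: fake not confirmed
    have hB : ∑ t ∈ S, e' t ≤ ∑ t ∈ S, e t + f := by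
      have h1 := hkey S hScard
      by_cases hiS : i ∈ S
      · have h2 : g i + ∑ u ∈ S.erase i, g u = ∑ u ∈ S, g u := Finset.add_sum_erase S g hiS
        have h3 : ∑ u ∈ S.erase i, g u = ∑ u ∈ S.erase i, e u :=
          Finset.sum_congr rfl (fun t ht => hgapp t (Finset.mem_erase.mp ht).1)
        have h4 : e i + ∑ u ∈ S.erase i, e u = ∑ u ∈ S, e u := Finset.add_sum_erase S e hiS
        rw [hgi] at h2
        linarith [henonneg i]
      · have h2 : ∑ u ∈ S, g u = ∑ u ∈ S, e u :=
          Finset.sum_congr rfl (fun t ht => hgapp t (fun h => hiS (h ▸ ht)))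
        linarith
    simp only [if_neg hj]
    nlinarith [mul_le_mul_of_nonneg_left hB hγ0.le]
end

section
/- The solitary mechanism satisfies c-weak-SCP for every c ≥ 1: no coalition of the miner and any subset of users can achieve expected joint 1-strict utility exceeding the honest joint utility; concretely, with m ≥ 2 users of true values v_1 ≥ v_2 ≥ … and any deviation (untruthful bids, fake bids, arbitrary two-bid inclusion), the coalition's 1-strict utility is at most its honest joint utility, namely v_1 if the top-value user is in the coalition and v_2 (the second-highest bid) otherwise. -/
/-- **The solitary mechanism is `c`-weak-SCP for every `c`.**
The solitary mechanism includes the two highest bids; only the highest included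
bid is confirmed, paying the second-highest included bid, which is the miner's
revenue.  Consider `m ≥ 2` users with nonnegative true values
`v 0 ≥ v 1 ≥ …`, a coalition `C` of users (together with the miner), and an
arbitrary deviation: the two included slots carry bids `β1 ≥ β2`, each slot
being either a real user's transaction (non-coalition users bid truthfully, no
user appears twice) or a fake transaction of true value `0`.  Under 1-strict
utility — the confirmed slot yields its owner's value minus the payment `β2`,
and the unconfirmed slot costs its overbid amount — the coalition's joint
utility is at most the honest joint utility: `v 0` if the top-value user is in
the coalition, and `v 1` (the second-highest value) otherwise. -/
theorem solitary_mechanism_weak_scp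
    (m : ℕ) (hm : 2 ≤ m) (v : Fin m → ℝ)
    (hsorted : ∀ i j : Fin m, i ≤ j → v j ≤ v i)
    (hnonneg : ∀ i, 0 ≤ v i)
    (C : Finset (Fin m))
    (slot1 slot2 : Option (Fin m)) (β1 β2 : ℝ)
    (hord : β2 ≤ β1)
    (hdistinct : ∀ u, slot1 = some u → slot2 ≠ some u)
    (htruth1 : ∀ u, slot1 = some u → u ∉ C → β1 = v u)
    (htruth2 : ∀ u, slot2 = some u → u ∉ C → β2 = v u) :
    (β2
        + (match slot1 with
            | some u => if u ∈ C then v u - β2 else 0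
            | none => -β2)
        + (match slot2 with
            | some u => if u ∈ C then -(max (β2 - v u) 0) else 0
            | none => -(max β2 0)))
      ≤ (if (⟨0, by omega⟩ : Fin m) ∈ C then v ⟨0, by omega⟩
          else v ⟨1, by omega⟩) := by

  have h0 : (⟨0, by omega⟩ : Fin m) = ⟨0, by omega⟩ := rfl
  set i0 : Fin m := ⟨0, by omega⟩ with hi0
  set i1 : Fin m := ⟨1, by omega⟩ with hi1
  have h01 : v i1 ≤ v i0 := hsorted _ _ (by simp [hi0, hi1, Fin.le_def])
  have hle : ∀ u : Fin m, u ≠ i0 → v u ≤ v i1 := by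
    intro u hu
    refine hsorted _ _ ?_
    have : u.val ≠ 0 := fun h => hu (Fin.ext h)
    rw [Fin.le_def]; simp [hi1]; omega
  have hle0 : ∀ u : Fin m, v u ≤ v i0 := fun u =>
    hsorted _ _ (by rw [Fin.le_def]; simp [hi0])
  have hrhs0 : 0 ≤ (if i0 ∈ C then v i0 else v i1) := by
    split <;> exact hnonneg _
  have hleC : ∀ u : Fin m, u ∈ C → v u ≤ (if i0 ∈ C then v i0 else v i1) := by
    intro u hu
    by_cases h : i0 ∈ C
    · simpa [h] using hle0 u
    · simpa [h] using hle u (fun he => h (he ▸ hu))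
  rcases slot1 with _ | u <;> rcases slot2 with _ | w <;>
    simp only [Option.some.injEq]
  · -- none none
    linarith [le_max_right β2 (0:ℝ)]
  · -- none some w
    by_cases hw : w ∈ C <;> simp [hw]
    · linarith [le_max_right (β2 - v w) (0:ℝ)]
    · exact hrhs0
  · -- some u none
    by_cases hu : u ∈ C <;> simp [hu]
    · have := hleC u hu
      linarith [le_max_right β2 (0:ℝ)]
    · have hb1 : β1 = v u := htruth1 u rfl hu
      linarith [le_max_left β2 (0:ℝ)]
  · -- some u some w
    have hne : w ≠ u := fun h => hdistinct u rfl (by rw [h])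
    by_cases hu : u ∈ C <;> by_cases hw : w ∈ C <;> simp [hu, hw]
    · have := hleC u hu
      linarith [le_max_right (β2 - v w) (0:ℝ)]
    · have hb2 : β2 = v w := htruth2 w rfl hw
      have := hleC u hu
      linarith
    · have := hleC w hw
      have hb1 : β1 = v u := htruth1 u rfl hu
      linarith [le_max_left (β2 - v w) (0:ℝ)]
    · have hb1 : β1 = v u := htruth1 u rfl hu
      have hb2 : β2 = v w := htruth2 w rfl hw
      by_cases h : i0 ∈ C
      · simp only [h, if_true]; linarith [hle0 w]
      · simp only [h, if_false]
        by_cases hu0 : u = i0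
        · have hw1 : v w ≤ v i1 := hle w (fun hh => hne (hh.trans hu0.symm))
          linarith
        · have hu1 : v u ≤ v i1 := hle u hu0
          linarith
end
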